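/- There exists a constant c > 0 such that for all nonzero ξ, η ∈ ℝ³ with ξ ≠ η and |ξ|/3 < |η| < 3|ξ|, one has |Φ₁(ξ,η)| ≥ c·|ξ−η|·( γ² + β² + d₁² ), where γ ∈ [0,π] is the angle between ξ and ξ−η, θ ∈ [0,π] is the angle between ξ and η, β = γ + θ, and d₁² = (|ξ|² + |η|²) / ((1 + |ξ|² + |η|²)(1 + |ξ−η|²)). -/

import Mathlib

noncomputable def q (r : ℝ) : ℝ := Real.sqrt ((2 + r ^ 2) / (1 + r ^ 2))
noncomputable def p (r : ℝ) : ℝ := r * q r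
noncomputable def Φ₁ (ξ η : EuclideanSpace ℝ (Fin 3)) : ℝ :=
  p ‖ξ‖ - p ‖ξ - η‖ - p ‖η‖

/-!
Write `u = ξ - η` and `v = η`, so that `ξ = u + v` and
`-Φ₁ ξ η = (p ‖u‖ + p ‖v‖ - p (‖u‖ + ‖v‖)) + (p (‖u‖ + ‖v‖) - p ‖u + v‖)`.
Since `q` is decreasing, `p r = r q(r)` is strictly superadditive, and the first bracket is at least
`‖u‖ ‖v‖² / (12 (1 + ‖u‖²)(1 + ‖v‖²))`; because `‖ξ‖ < 3 ‖η‖` this dominates `‖u‖ d₁²`.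
As `p` grows with slope at least `2/3`, the second bracket is bounded below by the triangle defect
`‖u‖ + ‖v‖ - ‖u + v‖`, which by the law of cosines is at least `‖u‖ β² / 20` with `β` the angle
between `u` and `v`. Finally `β = γ + θ` by the angle sum in the triangle `0, ξ, η`, and `γ ≤ β`.
-/

open Real InnerProductGeometry

lemma q_sq (r : ℝ) : q r ^ 2 = (2 + r ^ 2) / (1 + r ^ 2) :=
  sq_sqrt (by positivity)

lemma one_le_q (r : ℝ) : 1 ≤ q r := by
  refine one_le_sqrt.mpr ((one_le_div (by positivity)).mpr ?_)
  linarith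

lemma q_nonneg (r : ℝ) : 0 ≤ q r := zero_le_one.trans (one_le_q r)

lemma q_le_three_halves (r : ℝ) : q r ≤ 3 / 2 := by
  refine sqrt_le_iff.mpr ⟨by norm_num, ?_⟩
  rw [div_le_iff₀ (by positivity)]
  nlinarith [sq_nonneg r]

lemma sq_sub_sq_div_le_q_sub_q {x y : ℝ} (h : x ^ 2 ≤ y ^ 2) :
    (y ^ 2 - x ^ 2) / ((1 + x ^ 2) * (1 + y ^ 2)) / 3 ≤ q x - q y := by
  have hfactor : (q x - q y) * (q x + q y) = (y ^ 2 - x ^ 2) / ((1 + x ^ 2) * (1 + y ^ 2)) := by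
    rw [show (q x - q y) * (q x + q y) = q x ^ 2 - q y ^ 2 by ring, q_sq, q_sq]
    field_simp
    ring
  set D := (y ^ 2 - x ^ 2) / ((1 + x ^ 2) * (1 + y ^ 2))
  have hD : 0 ≤ D := div_nonneg (by linarith) (by positivity)
  have hsum_pos : 0 < q x + q y := by linarith [one_le_q x, one_le_q y]
  calc D / 3 ≤ D / (q x + q y) :=
        div_le_div_of_nonneg_left hD hsum_pos
          (by linarith [q_le_three_halves x, q_le_three_halves y])
    _ = q x - q y := by rw [← hfactor, mul_div_cancel_right₀ _ hsum_pos.ne']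

lemma q_le_q_of_sq_le_sq {x y : ℝ} (h : x ^ 2 ≤ y ^ 2) : q y ≤ q x := by
  have := sq_sub_sq_div_le_q_sub_q h
  have : 0 ≤ (y ^ 2 - x ^ 2) / ((1 + x ^ 2) * (1 + y ^ 2)) / 3 :=
    div_nonneg (div_nonneg (by linarith) (by positivity)) (by norm_num)
  linarith

lemma p_nonneg {r : ℝ} (hr : 0 ≤ r) : 0 ≤ p r := mul_nonneg hr (q_nonneg r)

lemma p_sq (r : ℝ) : p r ^ 2 = r ^ 2 + r ^ 2 / (1 + r ^ 2) := by
  rw [p, mul_pow, q_sq]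
  field_simp
  ring

lemma two_thirds_mul_sub_le_p_sub_p {x y : ℝ} (hx : 0 ≤ x) (hxy : x ≤ y) :
    2 / 3 * (y - x) ≤ p y - p x := by
  have hsq : y ^ 2 - x ^ 2 ≤ p y ^ 2 - p x ^ 2 := by
    rw [p_sq, p_sq]
    have : x ^ 2 / (1 + x ^ 2) ≤ y ^ 2 / (1 + y ^ 2) := by
      rw [div_le_div_iff₀ (by positivity) (by positivity)]
      nlinarith
    linarith
  have hle : p x ≤ p y :=
    (sq_le_sq₀ (p_nonneg hx) (p_nonneg (hx.trans hxy))).mp (by nlinarith)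
  have hsum : p x + p y ≤ 3 / 2 * (x + y) := by
    unfold p
    nlinarith [q_le_three_halves x, q_le_three_halves y]
  nlinarith

lemma mul_sq_div_le_mul_q_sub_q {s b : ℝ} (hs : 0 ≤ s) (hsb : s ≤ b) :
    s * b ^ 2 / (12 * ((1 + s ^ 2) * (1 + b ^ 2))) ≤ s * (q s - q (s + b)) := by
  have h := sq_sub_sq_div_le_q_sub_q (x := s) (y := s + b) (by nlinarith)
  calc s * b ^ 2 / (12 * ((1 + s ^ 2) * (1 + b ^ 2)))
      = s * (b ^ 2 / ((1 + s ^ 2) * (4 * (1 + b ^ 2))) / 3) := by field_simp; ring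
    _ ≤ s * (((s + b) ^ 2 - s ^ 2) / ((1 + s ^ 2) * (1 + (s + b) ^ 2)) / 3) := by
        gcongr s * (?_ / ((1 + s ^ 2) * ?_) / 3)
        · nlinarith
        · nlinarith
        · nlinarith
    _ ≤ s * (q s - q (s + b)) := by gcongr

lemma mul_sq_div_le_p_add_p_sub_p_add {s b : ℝ} (hs : 0 ≤ s) (hb : 0 ≤ b) :
    s * b ^ 2 / (12 * ((1 + s ^ 2) * (1 + b ^ 2))) ≤ p s + p b - p (s + b) := by
  have hsplit : p s + p b - p (s + b) = s * (q s - q (s + b)) + b * (q b - q (s + b)) := by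
    unfold p; ring
  have hqs : 0 ≤ s * (q s - q (s + b)) :=
    mul_nonneg hs (sub_nonneg.mpr (q_le_q_of_sq_le_sq (by nlinarith)))
  have hqb : 0 ≤ b * (q b - q (s + b)) :=
    mul_nonneg hb (sub_nonneg.mpr (q_le_q_of_sq_le_sq (by nlinarith)))
  rcases le_total s b with hsb | hbs
  · linarith [mul_sq_div_le_mul_q_sub_q hs hsb]
  · have h := mul_sq_div_le_mul_q_sub_q hb hbs
    rw [add_comm b s, mul_comm (1 + b ^ 2)] at h
    have : s * b ^ 2 ≤ b * s ^ 2 := by nlinarith [mul_nonneg hs hb]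
    have : s * b ^ 2 / (12 * ((1 + s ^ 2) * (1 + b ^ 2))) ≤
        b * s ^ 2 / (12 * ((1 + s ^ 2) * (1 + b ^ 2))) := by gcongr
    linarith

lemma le_p_add_p_sub_p {s b a : ℝ} (hs : 0 ≤ s) (hb : 0 ≤ b) (ha : 0 ≤ a) (hab : a ≤ s + b) :
    2 / 3 * (s + b - a) + s * b ^ 2 / (12 * ((1 + s ^ 2) * (1 + b ^ 2))) ≤ p s + p b - p a := by
  linarith [two_thirds_mul_sub_le_p_sub_p ha hab, mul_sq_div_le_p_add_p_sub_p_add hs hb]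

lemma sq_div_five_le_one_sub_cos {x : ℝ} (hx : |x| ≤ π) : x ^ 2 / 5 ≤ 1 - cos x := by
  have hπ : π ^ 2 ≤ 10 := by nlinarith [pi_lt_d2, pi_pos]
  have : x ^ 2 / 5 ≤ 2 / π ^ 2 * x ^ 2 := by
    rw [div_mul_eq_mul_div, div_le_div_iff₀ (by norm_num) (by positivity)]
    nlinarith [sq_nonneg x]
  linarith [cos_le_one_sub_mul_cos_sq hx]

section InnerProductSpace

variable {E : Type*} [NormedAddCommGroup E] [InnerProductSpace ℝ E]

lemma norm_add_sq_eq_norm_sq_add_norm_sq_add_two_mul_norm_mul_norm_mul_cos_angle (u v : E) :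
    ‖u + v‖ ^ 2 = ‖u‖ ^ 2 + ‖v‖ ^ 2 + 2 * ‖u‖ * ‖v‖ * cos (angle u v) := by
  rw [norm_add_sq_real, ← cos_angle_mul_norm_mul_norm]
  ring

lemma norm_mul_angle_sq_div_le_norm_add_norm_sub_norm_add {u v : E} (h : ‖u + v‖ < 3 * ‖v‖) :
    ‖u‖ * angle u v ^ 2 / 20 ≤ ‖u‖ + ‖v‖ - ‖u + v‖ := by
  have hcos := norm_add_sq_eq_norm_sq_add_norm_sq_add_two_mul_norm_mul_norm_mul_cos_angle u v
  have hangle := sq_div_five_le_one_sub_cos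
    (abs_le.mpr ⟨by linarith [pi_pos, angle_nonneg u v], angle_le_pi u v⟩)
  set s := ‖u‖
  set b := ‖v‖
  set a := ‖u + v‖
  set β := angle u v
  have hs : 0 ≤ s := norm_nonneg u
  have hb : 0 < b := by linarith [norm_nonneg (u + v)]
  have hab : a ≤ s + b := norm_add_le u v
  have hsa : s ≤ a + b := by simpa using norm_sub_le (u + v) v
  have key : s * β ^ 2 / 20 * (8 * b) ≤ (s + b - a) * (8 * b) :=
    calc s * β ^ 2 / 20 * (8 * b) = 2 * s * b * (β ^ 2 / 5) := by ring
      _ ≤ 2 * s * b * (1 - cos β) := by gcongr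
      _ = (s + b - a) * (s + b + a) := by linear_combination hcos
      _ ≤ (s + b - a) * (8 * b) := by gcongr; linarith
  exact le_of_mul_le_mul_right key (by positivity)

lemma angle_self_sub_add_angle_eq_angle_sub (x : E) {y : E} (hy : y ≠ 0) :
    angle x (x - y) + angle x y = angle (x - y) y := by
  have h := angle_add_angle_sub_add_angle_sub_eq_pi x hy
  have : angle (x - y) y = π - angle y (y - x) := by
    rw [← neg_sub y x, angle_neg_left, angle_comm]
  linarith

lemma le_p_norm_add_p_norm_sub_p_norm_add {u v : E} (h : ‖u + v‖ < 3 * ‖v‖) :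
    ‖u‖ * (2 * angle u v ^ 2 +
        (‖u + v‖ ^ 2 + ‖v‖ ^ 2) / ((1 + ‖u + v‖ ^ 2 + ‖v‖ ^ 2) * (1 + ‖u‖ ^ 2))) / 120 ≤
      p ‖u‖ + p ‖v‖ - p ‖u + v‖ := by
  have hgap := norm_mul_angle_sq_div_le_norm_add_norm_sub_norm_add h
  have hp := le_p_add_p_sub_p (norm_nonneg u) (norm_nonneg v) (norm_nonneg _) (norm_add_le u v)
  set s := ‖u‖
  set b := ‖v‖
  set a := ‖u + v‖
  have hd : (a ^ 2 + b ^ 2) / ((1 + a ^ 2 + b ^ 2) * (1 + s ^ 2)) ≤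
      10 * b ^ 2 / ((1 + b ^ 2) * (1 + s ^ 2)) :=
    div_le_div₀ (by positivity) (by nlinarith [norm_nonneg (u + v)]) (by positivity) (by nlinarith)
  have h10 : s * (10 * b ^ 2 / ((1 + b ^ 2) * (1 + s ^ 2))) / 120 =
      s * b ^ 2 / (12 * ((1 + s ^ 2) * (1 + b ^ 2))) := by
    field_simp
    ring
  calc s * (2 * angle u v ^ 2 + (a ^ 2 + b ^ 2) / ((1 + a ^ 2 + b ^ 2) * (1 + s ^ 2))) / 120
      = s * angle u v ^ 2 / 20 / 3 +
          s * ((a ^ 2 + b ^ 2) / ((1 + a ^ 2 + b ^ 2) * (1 + s ^ 2))) / 120 := by ring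
    _ ≤ 2 / 3 * (s + b - a) + s * (10 * b ^ 2 / ((1 + b ^ 2) * (1 + s ^ 2))) / 120 := by
        gcongr
        linarith [show 0 ≤ s * angle u v ^ 2 / 20 by positivity]
    _ = 2 / 3 * (s + b - a) + s * b ^ 2 / (12 * ((1 + s ^ 2) * (1 + b ^ 2))) := by rw [h10]
    _ ≤ p s + p b - p a := hp

end InnerProductSpace

theorem stmt13 :
    ∃ c : ℝ, 0 < c ∧
      ∀ ξ η : EuclideanSpace ℝ (Fin 3), ξ ≠ 0 → η ≠ 0 → ξ ≠ η →
        ‖ξ‖ / 3 < ‖η‖ → ‖η‖ < 3 * ‖ξ‖ →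
        c * (‖ξ - η‖ * (InnerProductGeometry.angle ξ (ξ - η) ^ 2 +
            (InnerProductGeometry.angle ξ (ξ - η) + InnerProductGeometry.angle ξ η) ^ 2 +
            (‖ξ‖ ^ 2 + ‖η‖ ^ 2) / ((1 + ‖ξ‖ ^ 2 + ‖η‖ ^ 2) * (1 + ‖ξ - η‖ ^ 2)))) ≤
          |Φ₁ ξ η| := by
  refine ⟨1 / 120, by norm_num, fun ξ η _ hη _ h13 _ => ?_⟩
  have h3 : ‖(ξ - η) + η‖ < 3 * ‖η‖ := by rw [sub_add_cancel]; linarith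
  have key := le_p_norm_add_p_norm_sub_p_norm_add h3
  rw [sub_add_cancel, ← angle_self_sub_add_angle_eq_angle_sub ξ hη] at key
  have hγ : angle ξ (ξ - η) ^ 2 ≤ (angle ξ (ξ - η) + angle ξ η) ^ 2 :=
    pow_le_pow_left₀ (angle_nonneg _ _) (le_add_of_nonneg_right (angle_nonneg _ _)) 2
  have hΦ : Φ₁ ξ η = -(p ‖ξ - η‖ + p ‖η‖ - p ‖ξ‖) := by unfold Φ₁; ring
  have hnonneg : 0 ≤ p ‖ξ - η‖ + p ‖η‖ - p ‖ξ‖ := le_trans (by positivity) key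
  rw [hΦ, abs_neg, abs_of_nonneg hnonneg]
  calc _ = ‖ξ - η‖ * ((angle ξ (ξ - η) ^ 2 + (angle ξ (ξ - η) + angle ξ η) ^ 2) +
        (‖ξ‖ ^ 2 + ‖η‖ ^ 2) / ((1 + ‖ξ‖ ^ 2 + ‖η‖ ^ 2) * (1 + ‖ξ - η‖ ^ 2))) / 120 := by ring
    _ ≤ _ := by gcongr ‖ξ - η‖ * (?_ + _) / 120; linarith
    _ ≤ _ := key
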